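/- arXiv:1009.5812 — 7 statements merged into one kernel-verified Lean document; each statement's English description precedes it below -/
import Mathlib

section
/- Let n ≥ 1, let F be a polynomial in n real variables, let z ∈ ℝⁿ, t ∈ ℝ and ε ∈ {+1, −1}. Set N(z) = sqrt(‖∇F(z)‖² + 1) and define the point x ∈ ℝ^{n+1} by x_j = z_j + ε·t·(∂F/∂z_j)(z)/N(z) for 1 ≤ j ≤ n and x_{n+1} = −F(z) + ε·t/N(z). Then the polynomial w ↦ Ψ(x,t,w) in the variables w = (w₁,…,w_n) satisfies Ψ(x,t,z) = 0 and (∂Ψ/∂w_j)(x,t,z) = 0 for all 1 ≤ j ≤ n; i.e. every point of the wave front W_t evolved from the initial front {F(z)+u=0} is a critical value of the projection from the incidence variety, equivalently z is a singular point of the hypersurface {w : Ψ(x,t,w)=0}. -/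
/-!
Write `Ψ = A² − t²·B` with `A(w) = Σ_j (x_j − w_j)·∂_jF(w) + x_{n+1} + F(w)` and
`B = ‖∇F‖² + 1`. In `∂_k A` the terms `∓∂_kF` cancel, leaving `Σ_j (x_j − w_j)·∂_k∂_jF`.
At `x = (z + s·∇F(z), −F(z) + s)` one finds `A(z) = s·B(z)`, `∂_kA(z) = s·G_k` and
`∂_kB(z) = 2·G_k` with `G_k = Σ_j ∂_jF·∂_k∂_jF (z)`, so `Ψ(z) = B(z)·(s²·B(z) − t²)` and
`∂_kΨ(z) = 2·G_k·(s²·B(z) − t²)`. Both vanish as soon as `s²·B(z) = t²`, which is exactly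
the choice `s = ±t/N(z)` of a unit normal.
-/

open MvPolynomial

/-- The phase function `Ψ(x,t,·)` associated to the polynomial `F`:
`Ψ(x,t,w) = (Σ_j (x_j − w_j)·∂F/∂w_j + x_{n+1} + F(w))² − t²·(Σ_j (∂F/∂w_j)² + 1)`,
regarded as a polynomial in `w`. -/
noncomputable def phasePoly (n : ℕ) (F : MvPolynomial (Fin n) ℝ)
    (x' : Fin n → ℝ) (xlast t : ℝ) : MvPolynomial (Fin n) ℝ :=
  (∑ j, (C (x' j) - X j) * pderiv j F + C xlast + F) ^ 2
    - C (t ^ 2) * (∑ j, (pderiv j F) ^ 2 + 1)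

namespace MvPolynomial

variable {R σ : Type*} [CommRing R] [Fintype σ]

/-- `A(w) = (a − w)·∇F(w) + c + F(w)`: the affine function of the tangent hyperplane to the
graph `{u = −F(w)}` at `w`, evaluated at the point `(a, c)`. -/
noncomputable def tangentPoly (F : MvPolynomial σ R) (a : σ → R) (c : R) : MvPolynomial σ R :=
  ∑ j, (C (a j) - X j) * pderiv j F + C c + F

noncomputable def normalSqPoly (F : MvPolynomial σ R) : MvPolynomial σ R :=
  ∑ j, pderiv j F ^ 2 + 1

theorem pderiv_tangentPoly (F : MvPolynomial σ R) (a : σ → R) (c : R) (k : σ) :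
    pderiv k (tangentPoly F a c) = ∑ j, (C (a j) - X j) * pderiv k (pderiv j F) := by
  classical
  simp only [tangentPoly, map_add, map_sum, Derivation.leibniz, map_sub, pderiv_C, pderiv_X,
    smul_eq_mul, Finset.sum_add_distrib, zero_sub, mul_neg, Pi.single_apply, mul_ite, mul_one,
    mul_zero, Finset.sum_neg_distrib, Finset.sum_ite_eq', Finset.mem_univ, if_true]
  ring

theorem pderiv_normalSqPoly (F : MvPolynomial σ R) (k : σ) :
    pderiv k (normalSqPoly F) = 2 * ∑ j, pderiv j F * pderiv k (pderiv j F) := by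
  simp only [normalSqPoly, map_add, map_sum, pderiv_pow, Derivation.map_one_eq_zero, add_zero,
    Finset.mul_sum]
  refine Finset.sum_congr rfl fun j _ => ?_
  norm_num
  ring

theorem eval_sum_C_sub_X_mul (z a : σ → R) (P : σ → MvPolynomial σ R) :
    eval z (∑ j, (C (a j) - X j) * P j) = ∑ j, (a j - z j) * eval z (P j) := by
  simp only [map_sum, map_mul, map_sub, eval_C, eval_X]

section NormalPoint

variable {F : MvPolynomial σ R} {z a : σ → R} {c s : R}

theorem eval_tangentPoly_of_normal_point (ha : ∀ j, a j = z j + s * eval z (pderiv j F))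
    (hc : c = -eval z F + s) :
    eval z (tangentPoly F a c) = s * eval z (normalSqPoly F) := by
  have hsum : ∑ j, (a j - z j) * eval z (pderiv j F) = s * ∑ j, eval z (pderiv j F) ^ 2 := by
    simp only [ha, Finset.mul_sum]
    exact Finset.sum_congr rfl fun j _ => by ring
  rw [tangentPoly, map_add, map_add, eval_sum_C_sub_X_mul, hsum, eval_C, hc, normalSqPoly]
  simp only [map_add, map_sum, map_pow, map_one]
  ring

theorem eval_pderiv_tangentPoly_of_normal_point (ha : ∀ j, a j = z j + s * eval z (pderiv j F))
    (k : σ) :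
    eval z (pderiv k (tangentPoly F a c))
      = s * ∑ j, eval z (pderiv j F) * eval z (pderiv k (pderiv j F)) := by
  rw [pderiv_tangentPoly, eval_sum_C_sub_X_mul, Finset.mul_sum]
  exact Finset.sum_congr rfl fun j _ => by rw [ha]; ring

end NormalPoint

end MvPolynomial

theorem phasePoly_eq (n : ℕ) (F : MvPolynomial (Fin n) ℝ) (x' : Fin n → ℝ) (xlast t : ℝ) :
    phasePoly n F x' xlast t = tangentPoly F x' xlast ^ 2 - C (t ^ 2) * normalSqPoly F :=
  rfl

theorem phasePoly_singular_of_normal_point {n : ℕ} {F : MvPolynomial (Fin n) ℝ}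
    {z x' : Fin n → ℝ} {xlast s t : ℝ}
    (hx' : ∀ j, x' j = z j + s * eval z (pderiv j F)) (hxlast : xlast = -eval z F + s)
    (hs : s ^ 2 * eval z (normalSqPoly F) = t ^ 2) :
    eval z (phasePoly n F x' xlast t) = 0 ∧
      ∀ k, eval z (pderiv k (phasePoly n F x' xlast t)) = 0 := by
  refine ⟨?_, fun k => ?_⟩
  · rw [phasePoly_eq, map_sub, map_pow, map_mul, eval_C,
      eval_tangentPoly_of_normal_point hx' hxlast]
    linear_combination eval z (normalSqPoly F) * hs
  · rw [phasePoly_eq, map_sub, pderiv_pow, pderiv_C_mul, pderiv_normalSqPoly]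
    simp only [map_sub, map_mul, map_pow, eval_C, map_natCast, map_ofNat, map_sum,
      Nat.add_one_sub_one, pow_one, eval_tangentPoly_of_normal_point hx' hxlast,
      eval_pderiv_tangentPoly_of_normal_point hx' k]
    linear_combination 2 * (∑ j, eval z (pderiv j F) * eval z (pderiv k (pderiv j F))) * hs

theorem statement0_general (n : ℕ) (F : MvPolynomial (Fin n) ℝ)
    (z : Fin n → ℝ) (t ε : ℝ) (hε : ε = 1 ∨ ε = -1)
    (N : ℝ) (hN : N = Real.sqrt ((∑ j, (eval z (pderiv j F)) ^ 2) + 1))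
    (x' : Fin n → ℝ)
    (hx' : ∀ j, x' j = z j + ε * t * eval z (pderiv j F) / N)
    (xlast : ℝ) (hxlast : xlast = -eval z F + ε * t / N) :
    eval z (phasePoly n F x' xlast t) = 0 ∧
      ∀ j, eval z (pderiv j (phasePoly n F x' xlast t)) = 0 := by
  have hB : eval z (normalSqPoly F) = N ^ 2 := by
    rw [hN, Real.sq_sqrt (by positivity), normalSqPoly]
    simp only [map_add, map_sum, map_pow, map_one]
  have hN0 : N ≠ 0 := by
    rw [hN]
    positivity
  have hε2 : ε ^ 2 = 1 := by rcases hε with rfl | rfl <;> norm_num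
  refine phasePoly_singular_of_normal_point (s := ε * t / N) (fun j => ?_) hxlast ?_
  · rw [hx']
    ring
  · rw [hB]
    field_simp
    linear_combination t ^ 2 * hε2

/-- Every point of the wave front `W_t` evolved from the initial front `{F(z)+u=0}`
is a critical value of the projection from the incidence variety: for the point `x`
reached at time `t` from `z` along the unit normal, `z` is a singular point of the
hypersurface `{w : Ψ(x,t,w)=0}`. -/
theorem statement0 (n : ℕ) (hn : 1 ≤ n) (F : MvPolynomial (Fin n) ℝ)
    (z : Fin n → ℝ) (t ε : ℝ) (hε : ε = 1 ∨ ε = -1)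
    (N : ℝ) (hN : N = Real.sqrt ((∑ j, (eval z (pderiv j F)) ^ 2) + 1))
    (x' : Fin n → ℝ)
    (hx' : ∀ j, x' j = z j + ε * t * eval z (pderiv j F) / N)
    (xlast : ℝ) (hxlast : xlast = -eval z F + ε * t / N) :
    eval z (phasePoly n F x' xlast t) = 0 ∧
      ∀ j, eval z (pderiv j (phasePoly n F x' xlast t)) = 0 :=
  statement0_general n F z t ε hε N hN x' hx' xlast hxlast
end

section
/- Let g ∈ ℂ[z₁,…,z_n] be such that the quotient algebra A = ℂ[z₁,…,z_n]/J(g) is a nonzero finite-dimensional ℂ-vector space. Then a complex number c is an eigenvalue of the ℂ-linear endomorphism of A given by multiplication by the residue class of g if and only if there exists a point p ∈ ℂⁿ with (∂g/∂z_j)(p) = 0 for all j and g(p) = c; that is, the eigenvalues of multiplication by g on the Jacobian quotient are exactly the critical values of g. -/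
/-!
Multiplication by `g` on the finite-dimensional algebra `A` has eigenvalue `c` iff `g - c` is not
a unit of `A`, i.e. iff `J(g) + (g - c)` is a proper ideal of `ℂ[z₁,…,z_n]`. By the
Nullstellensatz this happens iff the partial derivatives of `g` and `g - c` have a common zero.
-/

open MvPolynomial

/-- The Jacobian ideal of a polynomial: the ideal generated by its partial derivatives. -/
noncomputable def jacobianIdeal {n : ℕ} (g : MvPolynomial (Fin n) ℂ) :
    Ideal (MvPolynomial (Fin n) ℂ) :=
  Ideal.span (Set.range fun i => pderiv i g)

/-- The Jacobian quotient algebra `A = ℂ[z₁,…,z_n]/J(g)`. -/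
abbrev MilnorAlgebra {n : ℕ} (g : MvPolynomial (Fin n) ℂ) : Type _ :=
  MvPolynomial (Fin n) ℂ ⧸ jacobianIdeal g

theorem Ideal.Quotient.isUnit_mk_iff_span_singleton_sup_eq_top {R : Type*} [CommRing R]
    (I : Ideal R) (x : R) : IsUnit (Ideal.Quotient.mk I x) ↔ Ideal.span {x} ⊔ I = ⊤ := by
  rw [Ideal.eq_top_iff_one, Ideal.mem_span_singleton_sup, isUnit_iff_exists_inv']
  constructor
  · rintro ⟨y, hy⟩
    obtain ⟨a, rfl⟩ := Ideal.Quotient.mk_surjective y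
    refine ⟨a, 1 - a * x, ?_, by ring⟩
    rw [← Ideal.Quotient.eq_zero_iff_mem, map_sub, map_mul, hy, map_one, sub_self]
  · rintro ⟨a, b, hb, hab⟩
    refine ⟨Ideal.Quotient.mk I a, ?_⟩
    rw [← map_mul, ← map_one (Ideal.Quotient.mk I), ← hab, map_add,
      Ideal.Quotient.eq_zero_iff_mem.2 hb, add_zero]

theorem spectrum_lmul {K A : Type*} [CommRing K] [Ring A] [Algebra K A] (a : A) :
    spectrum K (Algebra.lmul K A a) = spectrum K a := by
  ext c
  rw [spectrum.mem_iff, spectrum.mem_iff, ← AlgHom.commutes (Algebra.lmul K A), ← map_sub,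
    Algebra.lmul_isUnit_iff]

theorem Module.End.hasEigenvalue_mulLeft_iff {K A : Type*} [Field K] [Ring A] [Algebra K A]
    [FiniteDimensional K A] (a : A) (c : K) :
    Module.End.HasEigenvalue (LinearMap.mulLeft K a) c ↔ c ∈ spectrum K a := by
  rw [← spectrum_lmul, Module.End.hasEigenvalue_iff_mem_spectrum]
  rfl

namespace MvPolynomial

variable {σ K : Type*} [Field K] [IsAlgClosed K] [Finite σ]

theorem zeroLocus_nonempty_iff_ne_top (I : Ideal (MvPolynomial σ K)) :
    (zeroLocus K I).Nonempty ↔ I ≠ ⊤ := by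
  constructor
  · rintro ⟨p, hp⟩ rfl
    simp [zeroLocus_top] at hp
  · intro hI
    by_contra h
    rw [Set.not_nonempty_iff_eq_empty] at h
    have hrad := vanishingIdeal_zeroLocus_eq_radical (K := K) I
    rw [h, vanishingIdeal_empty, eq_comm, Ideal.radical_eq_top] at hrad
    exact hI hrad

theorem mem_spectrum_quotient_mk_iff (I : Ideal (MvPolynomial σ K)) (f : MvPolynomial σ K)
    (c : K) : c ∈ spectrum K (Ideal.Quotient.mk I f) ↔ ∃ p ∈ zeroLocus K I, eval p f = c := by
  rw [spectrum.mem_iff, ← Ideal.Quotient.mk_algebraMap, ← map_sub,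
    Ideal.Quotient.isUnit_mk_iff_span_singleton_sup_eq_top, ← ne_eq,
    ← zeroLocus_nonempty_iff_ne_top, ← Ideal.span_eq I, ← Ideal.span_insert, zeroLocus_span,
    Ideal.span_eq]
  simp [Set.Nonempty, sub_eq_zero, and_comm, eq_comm (b := c)]

end MvPolynomial

theorem statement3_general (n : ℕ) (g : MvPolynomial (Fin n) ℂ)
    [FiniteDimensional ℂ (MilnorAlgebra g)]
    (c : ℂ) :
    Module.End.HasEigenvalue
      (LinearMap.mulLeft ℂ (Ideal.Quotient.mk (jacobianIdeal g) g)) c ↔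
      ∃ p : Fin n → ℂ, (∀ j, eval p (pderiv j g) = 0) ∧ eval p g = c := by
  rw [Module.End.hasEigenvalue_mulLeft_iff, mem_spectrum_quotient_mk_iff, jacobianIdeal,
    zeroLocus_span]
  simp

/-- If `A = ℂ[z]/J(g)` is a nonzero finite-dimensional `ℂ`-vector space, then the
eigenvalues of multiplication by (the residue class of) `g` on `A` are exactly the
critical values of `g`. -/
theorem statement3 (n : ℕ) (g : MvPolynomial (Fin n) ℂ)
    [Nontrivial (MilnorAlgebra g)] [FiniteDimensional ℂ (MilnorAlgebra g)]
    (c : ℂ) :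
    Module.End.HasEigenvalue
      (LinearMap.mulLeft ℂ (Ideal.Quotient.mk (jacobianIdeal g) g)) c ↔
      ∃ p : Fin n → ℂ, (∀ j, eval p (pderiv j g) = 0) ∧ eval p g = c :=
  statement3_general n g c
end

section
/- Let g ∈ ℂ[z₁,…,z_n] be such that the quotient algebra A = ℂ[z₁,…,z_n]/J(g) is a nonzero finite-dimensional ℂ-vector space. Then the set C = {p ∈ ℂⁿ : (∂g/∂z_j)(p) = 0 for all j} of critical points of g is finite, and the characteristic polynomial of the ℂ-linear endomorphism of A given by multiplication by the residue class of g equals Π_{p ∈ C} (X − g(p))^{μ_p}, where μ_p is the dimension over ℂ of the localization of A at the maximal ideal of A generated by the residue classes of z₁ − p₁, …, z_n − p_n. -/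
/-!
A finite-dimensional algebra `A = ℂ[z]/J(g)` is Artinian, hence the product of its localizations
at its finitely many maximal ideals. By the Nullstellensatz the maximal ideals of `A` are the
images `m_p` of the ideals of points `p` containing `J(g)`, i.e. of the critical points. The
localization at `m_p` is a local Artinian ring in which `g - g(p)` lies in the maximal ideal, so
it is nilpotent there and multiplication by `g` has characteristic polynomial `(X - g(p))^μ_p`
on that factor; the characteristic polynomial on `A` is the product of these.
-/

open MvPolynomial

namespace LinearMap

variable {R : Type*} [CommRing R]

theorem charpoly_eq_of_conj {M N : Type*} [AddCommGroup M] [Module R M] [Module.Free R M]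
    [Module.Finite R M] [AddCommGroup N] [Module R N] [Module.Free R N] [Module.Finite R N]
    (e : M ≃ₗ[R] N) {f : Module.End R M} {f' : Module.End R N} (h : ∀ x, e (f x) = f' (e x)) :
    f.charpoly = f'.charpoly := by
  rw [← e.charpoly_conj f]
  congr 1
  ext y
  simp [LinearEquiv.conj_apply, h]

universe u v

theorem charpoly_piMap {ι : Type u} [Fintype ι] {M : ι → Type v} [∀ i, AddCommGroup (M i)]
    [∀ i, Module R (M i)] [∀ i, Module.Free R (M i)] [∀ i, Module.Finite R (M i)]
    (f : ∀ i, Module.End R (M i)) :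
    (piMap f).charpoly = ∏ i, (f i).charpoly := by
  refine Fintype.induction_empty_option (P := fun ι _ => ∀ (M : ι → Type v)
    [∀ i, AddCommGroup (M i)] [∀ i, Module R (M i)] [∀ i, Module.Free R (M i)]
    [∀ i, Module.Finite R (M i)] (f : ∀ i, Module.End R (M i)),
    (piMap f).charpoly = ∏ i, (f i).charpoly) ?_ ?_ ?_ ι M f
  · intro α β _ e ih M _ _ _ _ f
    let := Fintype.ofEquiv β e.symm
    rw [charpoly_eq_of_conj (LinearEquiv.piCongrLeft' R M e.symm) (f' := piMap fun a => f (e a))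
      fun _ => rfl, ih]
    exact e.prod_comp fun b => (f b).charpoly
  · intro M _ _ _ _ f
    rw [Finset.univ_eq_empty, Finset.prod_empty,
      ← charpoly_toMatrix _ (Pi.basis fun i => Module.Free.chooseBasis R (M i))]
    exact Matrix.charpoly_isEmpty
  · intro α _ ih M _ _ _ _ f
    rw [charpoly_eq_of_conj (LinearEquiv.piOptionEquivProd R)
      (f' := (f none).prodMap (piMap fun a => f (some a))) fun _ => rfl,
      charpoly_prodMap, ih, Fintype.prod_option]

theorem charpoly_eq_X_sub_C_pow_of_isNilpotent_sub_smul [IsDomain R] {M : Type*} [AddCommGroup M]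
    [Module R M] [Module.Free R M] [Module.Finite R M] {f : Module.End R M} {c : R}
    (h : IsNilpotent (f - c • 1)) :
    f.charpoly = (Polynomial.X - Polynomial.C c) ^ Module.finrank R M := by
  have hshift := h.charpoly_eq_X_pow_finrank
  rw [charpoly_sub_smul] at hshift
  have hback := congrArg (·.comp (Polynomial.X - Polynomial.C c)) hshift
  simpa only [Polynomial.comp_assoc, Polynomial.add_comp, Polynomial.X_comp, Polynomial.C_comp,
    sub_add_cancel, Polynomial.comp_X, Polynomial.X_pow_comp] using hback

theorem charpoly_mulLeft_of_isNilpotent_sub_algebraMap [IsDomain R] {A : Type*} [Ring A]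
    [Algebra R A] [Module.Free R A] [Module.Finite R A] {a : A} {c : R}
    (h : IsNilpotent (a - algebraMap R A c)) :
    (mulLeft R a).charpoly = (Polynomial.X - Polynomial.C c) ^ Module.finrank R A := by
  apply charpoly_eq_X_sub_C_pow_of_isNilpotent_sub_smul
  have hshift : mulLeft R a - c • 1 = mulLeft R (a - algebraMap R A c) := by
    ext x
    simp [sub_mul, Algebra.smul_def]
  rw [hshift]
  exact h.map (Algebra.lmul R A)

end LinearMap

theorem IsArtinianRing.isNilpotent_of_mem_maximalIdeal {R : Type*} [CommRing R]
    [IsArtinianRing R] [IsLocalRing R] {x : R} (hx : x ∈ IsLocalRing.maximalIdeal R) :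
    IsNilpotent x := by
  rw [← IsLocalRing.jacobson_eq_maximalIdeal ⊥ bot_ne_top,
    IsArtinianRing.jacobson_eq_radical] at hx
  exact hx.imp fun _ => Ideal.mem_bot.mp

open LinearMap in
theorem charpoly_mulLeft_eq_prod_localization {K A : Type*} [Field K] [CommRing A] [Algebra K A]
    [FiniteDimensional K A] [Fintype (MaximalSpectrum A)] (a : A) (c : MaximalSpectrum A → K)
    (hc : ∀ I, a - algebraMap K A (c I) ∈ I.asIdeal) :
    (mulLeft K a).charpoly = ∏ I, (Polynomial.X - Polynomial.C (c I)) ^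
      Module.finrank K (Localization.AtPrime I.asIdeal) := by
  have := IsArtinianRing.of_finite K A
  have (I : MaximalSpectrum A) : Module.Finite K (Localization.AtPrime I.asIdeal) :=
    .of_surjective (IsScalarTower.toAlgHom K A _).toLinearMap
      (IsArtinianRing.localization_surjective I.asIdeal.primeCompl _)
  let e := ((MaximalSpectrum.toPiLocalizationEquiv A).restrictScalars K).toLinearEquiv
  rw [charpoly_eq_of_conj e (f' := piMap fun I => mulLeft K (algebraMap A _ a))
    fun x => map_mul (MaximalSpectrum.toPiLocalizationEquiv A) a x, charpoly_piMap]
  refine Finset.prod_congr rfl fun I _ => charpoly_mulLeft_of_isNilpotent_sub_algebraMap ?_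
  rw [IsScalarTower.algebraMap_apply K A, ← map_sub]
  exact IsArtinianRing.isNilpotent_of_mem_maximalIdeal
    ((IsLocalization.AtPrime.to_map_mem_maximal_iff _ I.asIdeal _).mpr (hc I))

namespace MvPolynomial

variable {σ R : Type*} [CommRing R]

theorem sub_C_eval_mem_span_X_sub_C (x : σ → R) (f : MvPolynomial σ R) :
    f - C (eval x f) ∈ Ideal.span (Set.range fun i => X i - C (x i)) := by
  induction f using MvPolynomial.induction_on with
  | C a => simp
  | add p q hp hq => simpa [add_sub_add_comm] using Ideal.add_mem _ hp hq
  | mul_X p i hp =>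
    have hsplit : p * X i - C (eval x (p * X i)) =
        p * (X i - C (x i)) + (p - C (eval x p)) * C (x i) := by
      simp only [map_mul, eval_X]
      ring
    rw [hsplit]
    exact Ideal.add_mem _ (Ideal.mul_mem_left _ _ (Ideal.subset_span ⟨i, rfl⟩))
      (Ideal.mul_mem_right _ _ hp)

variable {k : Type*} [Field k]

theorem vanishingIdeal_singleton_eq_span (x : σ → k) :
    vanishingIdeal k {x} = Ideal.span (Set.range fun i => X i - C (x i)) := by
  ext f
  rw [mem_vanishingIdeal_singleton_iff, aeval_eq_eval]
  constructor
  · intro hf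
    simpa [hf] using sub_C_eval_mem_span_X_sub_C x f
  · refine fun hf => (?_ : Ideal.span _ ≤ RingHom.ker (eval x)) hf
    exact Ideal.span_le.mpr (Set.range_subset_iff.mpr fun i => by simp)

theorem vanishingIdeal_singleton_injective :
    Function.Injective fun x : σ → k => vanishingIdeal k {x} := by
  intro x y (hxy : vanishingIdeal k {x} = vanishingIdeal k {y})
  funext i
  have : X i - C (x i) ∈ vanishingIdeal k {y} := by
    rw [← hxy]
    simp
  simpa [mem_vanishingIdeal_singleton_iff, sub_eq_zero, eq_comm] using this

end MvPolynomial

def criticalPoints {n : ℕ} (g : MvPolynomial (Fin n) ℂ) : Set (Fin n → ℂ) :=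
  {p | ∀ j, eval p (pderiv j g) = 0}

namespace MilnorAlgebra

variable {n : ℕ} (g : MvPolynomial (Fin n) ℂ)

noncomputable def pointIdeal (p : Fin n → ℂ) : Ideal (MilnorAlgebra g) :=
  (vanishingIdeal ℂ {p}).map (Ideal.Quotient.mk (jacobianIdeal g))

variable {g}

theorem jacobianIdeal_le_vanishingIdeal_iff {p : Fin n → ℂ} :
    jacobianIdeal g ≤ vanishingIdeal ℂ {p} ↔ p ∈ criticalPoints g := by
  simp [jacobianIdeal, Ideal.span_le, Set.range_subset_iff, criticalPoints]

theorem span_mk_X_sub_C_eq_pointIdeal (p : Fin n → ℂ) :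
    Ideal.span (Set.range fun i => Ideal.Quotient.mk (jacobianIdeal g) (X i - C (p i))) =
      pointIdeal g p := by
  rw [pointIdeal, vanishingIdeal_singleton_eq_span, Ideal.map_span, ← Set.range_comp]
  rfl

theorem comap_pointIdeal {p : Fin n → ℂ} (hp : p ∈ criticalPoints g) :
    (pointIdeal g p).comap (Ideal.Quotient.mk _) = vanishingIdeal ℂ {p} :=
  Ideal.comap_map_mk (jacobianIdeal_le_vanishingIdeal_iff.mpr hp)

theorem pointIdeal_isMaximal {p : Fin n → ℂ} (hp : p ∈ criticalPoints g) :
    (pointIdeal g p).IsMaximal :=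
  Ideal.IsMaximal.map_of_surjective_of_ker_le Ideal.Quotient.mk_surjective
    (by rw [Ideal.mk_ker]; exact jacobianIdeal_le_vanishingIdeal_iff.mpr hp)

theorem pointIdeal_injOn : Set.InjOn (pointIdeal g) (criticalPoints g) := fun p hp q hq h =>
  vanishingIdeal_singleton_injective (k := ℂ) <| by
    simp only [← comap_pointIdeal hp, ← comap_pointIdeal hq, h]

theorem exists_pointIdeal_eq (I : Ideal (MilnorAlgebra g)) [I.IsMaximal] :
    ∃ p ∈ criticalPoints g, pointIdeal g p = I := by
  obtain ⟨p, hp⟩ := eq_vanishingIdeal_singleton_of_isMaximal ℂ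
    (Ideal.comap_isMaximal_of_surjective _ Ideal.Quotient.mk_surjective (K := I))
  refine ⟨p, jacobianIdeal_le_vanishingIdeal_iff.mp ?_, ?_⟩
  · rw [← hp]
    simpa only [Ideal.mk_ker] using Ideal.ker_le_comap (K := I) (Ideal.Quotient.mk _)
  · rw [pointIdeal, ← hp, Ideal.map_comap_of_surjective _ Ideal.Quotient.mk_surjective]

theorem mk_sub_algebraMap_eval_mem_pointIdeal (p : Fin n → ℂ) :
    Ideal.Quotient.mk (jacobianIdeal g) g - algebraMap ℂ (MilnorAlgebra g) (eval p g) ∈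
      pointIdeal g p := by
  change Ideal.Quotient.mk _ g - Ideal.Quotient.mk _ (C (eval p g)) ∈ _
  rw [← map_sub]
  exact Ideal.mem_map_of_mem _ (by simp)

variable (g) in
noncomputable def criticalPointsEquivMaximalSpectrum :
    criticalPoints g ≃ MaximalSpectrum (MilnorAlgebra g) :=
  Equiv.ofBijective (fun p => ⟨pointIdeal g p, pointIdeal_isMaximal p.2⟩)
    ⟨fun p q h => Subtype.ext (pointIdeal_injOn p.2 q.2 (congrArg MaximalSpectrum.asIdeal h)),
      fun I =>
        let ⟨p, hp, hpI⟩ := exists_pointIdeal_eq I.asIdeal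
        ⟨⟨p, hp⟩, MaximalSpectrum.ext hpI⟩⟩

theorem pointIdeal_criticalPointsEquivMaximalSpectrum_symm
    (I : MaximalSpectrum (MilnorAlgebra g)) :
    pointIdeal g ((criticalPointsEquivMaximalSpectrum g).symm I) = I.asIdeal :=
  congrArg MaximalSpectrum.asIdeal ((criticalPointsEquivMaximalSpectrum g).apply_symm_apply I)

end MilnorAlgebra

theorem statement4_general (n : ℕ) (g : MvPolynomial (Fin n) ℂ)
    [FiniteDimensional ℂ (MilnorAlgebra g)]
    (Crit : Set (Fin n → ℂ))
    (hCrit : Crit = {p | ∀ j, eval p (pderiv j g) = 0})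
    (m : (Fin n → ℂ) → Ideal (MilnorAlgebra g))
    (hm : ∀ p, m p = Ideal.span
      (Set.range fun i => Ideal.Quotient.mk (jacobianIdeal g) (X i - C (p i)))) :
    Crit.Finite ∧
    (∀ p ∈ Crit, (m p).IsMaximal) ∧
    ∀ (hfin : Crit.Finite) (hpr : ∀ p ∈ Crit, (m p).IsPrime),
      LinearMap.charpoly
        (LinearMap.mulLeft ℂ (Ideal.Quotient.mk (jacobianIdeal g) g)) =
      ∏ p ∈ hfin.toFinset.attach,
        letI : (m (p : Fin n → ℂ)).IsPrime :=
          hpr (p : Fin n → ℂ) (hfin.mem_toFinset.mp p.2)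
        letI : Algebra ℂ (Localization.AtPrime (m (p : Fin n → ℂ))) :=
          ((algebraMap (MilnorAlgebra g) (Localization.AtPrime (m (p : Fin n → ℂ)))).comp
            (algebraMap ℂ (MilnorAlgebra g))).toAlgebra
        (Polynomial.X - Polynomial.C (eval (p : Fin n → ℂ) g)) ^
          Module.finrank ℂ (Localization.AtPrime (m (p : Fin n → ℂ))) := by
  obtain rfl : Crit = criticalPoints g := hCrit
  obtain rfl : m = MilnorAlgebra.pointIdeal g :=
    funext fun p => (hm p).trans (MilnorAlgebra.span_mk_X_sub_C_eq_pointIdeal p)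
  have := IsArtinianRing.of_finite ℂ (MilnorAlgebra g)
  let e := MilnorAlgebra.criticalPointsEquivMaximalSpectrum g
  refine ⟨Set.finite_coe_iff.mp (Finite.of_equiv _ e.symm),
    fun p hp => MilnorAlgebra.pointIdeal_isMaximal hp, fun hfin _ => ?_⟩
  let := Fintype.ofFinite (MaximalSpectrum (MilnorAlgebra g))
  rw [charpoly_mulLeft_eq_prod_localization _ (fun I => eval (e.symm I).1 g) fun I => ?_]
  · rw [← Finset.univ_eq_attach]
    refine (Fintype.prod_equiv ((Equiv.subtypeEquivRight fun _ => hfin.mem_toFinset).trans e)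
      _ _ fun p => ?_).symm
    simp only [Equiv.trans_apply, Equiv.symm_apply_apply, Equiv.subtypeEquivRight_apply_coe]
    -- the statement's `ℂ`-algebra structure on the localization is the library's one up to defeq
    rfl
  · rw [← MilnorAlgebra.pointIdeal_criticalPointsEquivMaximalSpectrum_symm I]
    exact MilnorAlgebra.mk_sub_algebraMap_eval_mem_pointIdeal _

/-- If `A = ℂ[z]/J(g)` is a nonzero finite-dimensional `ℂ`-vector space, then the set `C`
of critical points of `g` is finite, the ideal `m_p ⊆ A` generated by the residue classes
of `z₁ − p₁, …, z_n − p_n` is maximal for each `p ∈ C`, and the characteristic polynomial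
of multiplication by `g` on `A` equals `Π_{p ∈ C} (X − g(p))^{μ_p}`, where
`μ_p = dim_ℂ` of the localization of `A` at `m_p` (the local Milnor number at `p`). -/
theorem statement4 (n : ℕ) (g : MvPolynomial (Fin n) ℂ)
    [Nontrivial (MilnorAlgebra g)] [FiniteDimensional ℂ (MilnorAlgebra g)]
    (Crit : Set (Fin n → ℂ))
    (hCrit : Crit = {p | ∀ j, eval p (pderiv j g) = 0})
    (m : (Fin n → ℂ) → Ideal (MilnorAlgebra g))
    (hm : ∀ p, m p = Ideal.span
      (Set.range fun i => Ideal.Quotient.mk (jacobianIdeal g) (X i - C (p i)))) :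
    Crit.Finite ∧
    (∀ p ∈ Crit, (m p).IsMaximal) ∧
    ∀ (hfin : Crit.Finite) (hpr : ∀ p ∈ Crit, (m p).IsPrime),
      LinearMap.charpoly
        (LinearMap.mulLeft ℂ (Ideal.Quotient.mk (jacobianIdeal g) g)) =
      ∏ p ∈ hfin.toFinset.attach,
        letI : (m (p : Fin n → ℂ)).IsPrime :=
          hpr (p : Fin n → ℂ) (hfin.mem_toFinset.mp p.2)
        letI : Algebra ℂ (Localization.AtPrime (m (p : Fin n → ℂ))) :=
          ((algebraMap (MilnorAlgebra g) (Localization.AtPrime (m (p : Fin n → ℂ)))).comp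
            (algebraMap ℂ (MilnorAlgebra g))).toAlgebra
        (Polynomial.X - Polynomial.C (eval (p : Fin n → ℂ) g)) ^
          Module.finrank ℂ (Localization.AtPrime (m (p : Fin n → ℂ))) :=
  statement4_general n g Crit hCrit m hm
end

section
/- Let h ∈ ℂ[x₁,…,x_N] be a squarefree polynomial, and let θ₁,…,θ_N be ℂ-linear derivations of ℂ[x₁,…,x_N] such that θ_i(h) belongs to the principal ideal (h) for every i (i.e. each θ_i is tangent to the hypersurface {h = 0}). Then h divides the determinant of the N × N matrix whose (i,j) entry is θ_i(x_j). -/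
/-!
With `M = (θᵢ(xⱼ))`, the chain rule says `M ∇h = (θᵢ h)ᵢ`, whose entries are all divisible by `h`;
multiplying by the adjugate of `M` gives `h ∣ det M · ∂ⱼh` for every `j`. Each prime factor `p` of
`h` has a partial derivative `∂ⱼp` that `p` does not divide (it has smaller degree and, in
characteristic zero, the partials of a nonconstant polynomial do not all vanish). Since `h` is
squarefree, `p ∤ ∂ⱼh` by the Leibniz rule, so `p ∣ det M`; a squarefree element divides whatever
all of its prime factors divide.
-/

open Matrix MvPolynomial

theorem Matrix.dvd_det_mul_of_dvd_mulVec {n R : Type*} [Fintype n] [DecidableEq n] [CommRing R]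
    (M : Matrix n n R) (v : n → R) {h : R} (hMv : ∀ i, h ∣ (M *ᵥ v) i) (j : n) :
    h ∣ M.det * v j := by
  choose w hw using hMv
  have : M.det • v = h • (M.adjugate *ᵥ w) := calc
    M.det • v = (M.adjugate * M) *ᵥ v := by rw [adjugate_mul, smul_mulVec, one_mulVec]
    _ = M.adjugate *ᵥ (h • w) := by rw [← mulVec_mulVec, show M *ᵥ v = h • w from funext hw]
    _ = h • (M.adjugate *ᵥ w) := mulVec_smul _ _ _
  exact ⟨_, congrFun this j⟩

theorem Squarefree.dvd_of_forall_prime_dvd {R : Type*} [CommMonoidWithZero R]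
    [UniqueFactorizationMonoid R] [Nontrivial R] {x y : R} (hx : Squarefree x)
    (hxy : ∀ p, Prime p → p ∣ x → p ∣ y) : x ∣ y := by
  induction x using UniqueFactorizationMonoid.induction_on_prime with
  | h₁ => exact absurd hx not_squarefree_zero
  | h₂ u hu => exact hu.dvd
  | h₃ a p _ hp ih =>
    exact (IsRelPrime.of_squarefree_mul hx).mul_dvd (hxy p hp (dvd_mul_right p a))
      (ih hx.of_mul_right fun q hq hqa => hxy q hq (hqa.mul_left p))

theorem Prime.not_dvd_derivation_apply_of_squarefree {R A : Type*} [CommSemiring R] [CommRing A]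
    [Algebra R A] (D : Derivation R A A) {p h : A} (hp : Prime p) (hh : Squarefree h)
    (hph : p ∣ h) (hDp : ¬ p ∣ D p) : ¬ p ∣ D h := by
  obtain ⟨q, rfl⟩ := hph
  have hpq : ¬ p ∣ q := fun hpq => hp.not_isUnit (hh p (mul_dvd_mul_left p hpq))
  rw [Derivation.leibniz, smul_eq_mul, smul_eq_mul, dvd_add_right (dvd_mul_right p _)]
  exact fun h => (hp.dvd_or_dvd h).elim hpq hDp

namespace MvPolynomial

variable {σ R : Type*}

theorem derivation_eq_sum_pderiv [CommSemiring R] [Fintype σ]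
    (D : Derivation R (MvPolynomial σ R) (MvPolynomial σ R)) (f : MvPolynomial σ R) :
    D f = ∑ j, D (X j) * pderiv j f := by
  classical
  have sum_apply (g : MvPolynomial σ R) :
      (∑ j, D (X j) • pderiv j) g = ∑ j, D (X j) * pderiv j g := by
    rw [← Derivation.coeFnAddMonoidHom_apply, map_sum, Finset.sum_apply]
    rfl
  have hD : D = ∑ j, D (X j) • pderiv j := derivation_ext fun i => by
    simp [sum_apply, pderiv_X, Pi.single_apply]
  exact (DFunLike.congr_fun hD f).trans (sum_apply f)

theorem totalDegree_pderiv_lt [CommSemiring R] {f : MvPolynomial σ R}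
    (hf : 0 < f.totalDegree) (j : σ) : (pderiv j f).totalDegree < f.totalDegree := by
  classical
  refine lt_of_le_of_lt (Finset.sup_le fun m hm => ?_) (Nat.sub_lt hf one_pos)
  have hc : m + Finsupp.single j 1 ∈ f.support := by
    rw [mem_support_iff, coeff_pderiv] at hm
    exact mem_support_iff.mpr (left_ne_zero_of_mul hm)
  have := le_totalDegree hc
  rw [Finsupp.sum_add_index' (fun _ => rfl) (fun _ _ _ => rfl),
    Finsupp.sum_single_index rfl] at this
  omega

theorem pderiv_ne_zero_of_mem_vars [CommSemiring R] [NoZeroDivisors R] [CharZero R]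
    {f : MvPolynomial σ R} {j : σ} (hj : j ∈ f.vars) : pderiv j f ≠ 0 := by
  obtain ⟨s, hs, hjs⟩ := (mem_vars_iff_mem_support j).mp hj
  have hle : Finsupp.single j 1 ≤ s :=
    Finsupp.single_le_iff.mpr (Nat.one_le_iff_ne_zero.mpr (Finsupp.mem_support_iff.mp hjs))
  intro h0
  have := coeff_pderiv (i := j) f (s - Finsupp.single j 1)
  rw [h0, coeff_zero, tsub_add_cancel_of_le hle] at this
  exact mul_ne_zero (mem_support_iff.mp hs) (Nat.cast_add_one_ne_zero _) this.symm

theorem exists_not_dvd_pderiv [CommRing R] [IsDomain R] [CharZero R]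
    {p : MvPolynomial σ R} (hp : 0 < p.totalDegree) : ∃ j, ¬ p ∣ pderiv j p := by
  by_contra! hdvd
  have hzero : ∀ j, pderiv j p = 0 := fun j => by
    by_contra hne
    exact (totalDegree_pderiv_lt hp j).not_ge (totalDegree_le_of_dvd_of_isDomain (hdvd j) hne)
  have hvars : p.vars = ∅ :=
    Finset.eq_empty_of_forall_notMem fun j hj => pderiv_ne_zero_of_mem_vars hj (hzero j)
  rw [vars_eq_empty_iff_eq_C, ← totalDegree_eq_zero_iff_eq_C] at hvars
  omega

theorem totalDegree_pos_of_prime [Field R] {p : MvPolynomial σ R} (hp : Prime p) :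
    0 < p.totalDegree := by
  by_contra! h
  rw [Nat.le_zero, totalDegree_eq_zero_iff_eq_C] at h
  have hc : p.coeff 0 ≠ 0 := fun hc => hp.ne_zero (by rw [h, hc, C_0])
  exact hp.not_isUnit (h ▸ (isUnit_iff_ne_zero.mpr hc).map C)

theorem _root_.Squarefree.dvd_of_forall_dvd_mul_pderiv [Field R] [CharZero R] {h d : MvPolynomial σ R}
    (hh : Squarefree h) (hd : ∀ j, h ∣ d * pderiv j h) : h ∣ d := by
  refine hh.dvd_of_forall_prime_dvd fun p hp hph => ?_
  obtain ⟨j, hj⟩ := exists_not_dvd_pderiv (totalDegree_pos_of_prime hp)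
  exact (hp.dvd_or_dvd (hph.trans (hd j))).resolve_right
    (hp.not_dvd_derivation_apply_of_squarefree (pderiv j) hh hph hj)

end MvPolynomial

/-- If `h ∈ ℂ[x₁,…,x_N]` is squarefree and `θ₁,…,θ_N` are derivations tangent to the
hypersurface `{h = 0}` (i.e. `θ_i(h) ∈ (h)`), then `h` divides the determinant of the
`N × N` matrix `(θ_i(x_j))`. -/
theorem statement5 (N : ℕ) (h : MvPolynomial (Fin N) ℂ) (hsf : Squarefree h)
    (θ : Fin N → Derivation ℂ (MvPolynomial (Fin N) ℂ) (MvPolynomial (Fin N) ℂ))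
    (htan : ∀ i, θ i h ∈ Ideal.span {h}) :
    h ∣ (Matrix.of fun i j => θ i (X j)).det := by
  set M : Matrix (Fin N) (Fin N) (MvPolynomial (Fin N) ℂ) := Matrix.of fun i j => θ i (X j)
  have hM : ∀ i, (M *ᵥ fun j => pderiv j h) i = θ i h := fun i => by
    simp only [M, mulVec, dotProduct, of_apply, ← derivation_eq_sum_pderiv]
  refine hsf.dvd_of_forall_dvd_mul_pderiv fun j => M.dvd_det_mul_of_dvd_mulVec (fun k => pderiv k h)
    (fun i => ?_) j
  rw [hM i, ← Ideal.mem_span_singleton]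
  exact htan i
end

section
/- Let a be a nonzero real number and P_a(z) = (a² − 1/a)·z⁴ + (6a − 4/a²)·z⁶ + 9·z⁸ ∈ ℂ[z]. Then the quotient ring ℂ[z]/(P_a′), where (P_a′) is the ideal generated by the derivative of P_a, is a ℂ-vector space of dimension exactly 7; i.e. the global Milnor number μ of the phase function at the focal point equals 7. -/
open Polynomial

/-! In characteristic zero `P′` has degree `deg P − 1`, and `ℂ[z]/(g)` has the basis
`1, z, …, z^(deg g − 1)`; so `μ = deg P − 1 = 7`. -/

theorem finrank_quotient_span_derivative {K : Type*} [Field K] [CharZero K] (p : K[X]) :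
    Module.finrank K (K[X] ⧸ Ideal.span {derivative p}) = p.natDegree - 1 := by
  rw [finrank_quotient_span_eq_natDegree, natDegree_derivative]

theorem statement10_general (a : ℝ) (P : ℂ[X])
    (hP : P = C ((a : ℂ) ^ 2 - 1 / (a : ℂ)) * X ^ 4
      + C (6 * (a : ℂ) - 4 / (a : ℂ) ^ 2) * X ^ 6 + 9 * X ^ 8) :
    FiniteDimensional ℂ (ℂ[X] ⧸ Ideal.span {derivative P}) ∧
      Module.finrank ℂ (ℂ[X] ⧸ Ideal.span {derivative P}) = 7 := by
  have hdeg : P.natDegree = 8 := by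
    subst hP
    compute_degree!
  have hμ : Module.finrank ℂ (ℂ[X] ⧸ Ideal.span {derivative P}) = 7 := by
    rw [finrank_quotient_span_derivative, hdeg]
  exact ⟨Module.finite_of_finrank_pos (by omega), hμ⟩

/-- For a nonzero real `a` and `P_a(z) = (a² − 1/a)z⁴ + (6a − 4/a²)z⁶ + 9z⁸ ∈ ℂ[z]`,
the quotient ring `ℂ[z]/(P_a′)` is a `ℂ`-vector space of dimension exactly `7`:
the global Milnor number `μ` of the phase function at the focal point equals `7`. -/
theorem statement10 (a : ℝ) (ha : a ≠ 0) (P : ℂ[X])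
    (hP : P = C ((a : ℂ) ^ 2 - 1 / (a : ℂ)) * X ^ 4
      + C (6 * (a : ℂ) - 4 / (a : ℂ) ^ 2) * X ^ 6 + 9 * X ^ 8) :
    FiniteDimensional ℂ (ℂ[X] ⧸ Ideal.span {derivative P}) ∧
      Module.finrank ℂ (ℂ[X] ⧸ Ideal.span {derivative P}) = 7 :=
  statement10_general a P hP
end

section
/- The 11 × 8 complex matrix T with rows r₁ = (0,0,0,0,0,0,1/2,0), r₂ = (0,0,0,0,0,−1/12,0,0), r₃ = (0,0,0,0,0,0,−1/12,0), r₄ = (0,0,0,0,0,1/72,0,0), r₅ = (0,0,0,0,0,0,1/72,0), r₆ = (0,0,0,0,0,−1/432,0,0), r₇ = (0,0,0,0,0,0,−1/432,0), r₈ = (0,0,0,0,0,12,0,72), r₉ = (0,−2,0,−8,0,−20,0,−24), r₁₀ = (0,−1,0,−2,0,−6,0,0), r₁₁ = (−1,0,−4,0,−16,0,−16,0) has rank exactly 6 (in particular its rank is strictly less than 8, so the mapping ι is not algebraically transverse to the discriminant at the focal point). -/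
/-!
Columns 2 and 4 of `T` are 4 and 16 times column 0, so every column of `T` is a combination of
the six columns `0, 1, 3, 5, 6, 7`, and the rank is at most 6. Conversely, the `6 × 6` minor on
those columns and on rows `0, 1, 7, 8, 9, 10` has an explicit inverse, so the rank is at least 6.
-/

namespace Matrix

variable {m n k R : Type*} [Fintype n] [Fintype k]

theorem rank_le_card_of_eq_mul [CommSemiring R] [StrongRankCondition R] {A : Matrix m n R}
    (B : Matrix m k R) (C : Matrix k n R) (h : A = B * C) : A.rank ≤ Fintype.card k :=
  h ▸ (rank_mul_le_left B C).trans B.rank_le_card_width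

theorem card_le_rank_of_submatrix_mul_eq_one [CommRing R] [StrongRankCondition R] [DecidableEq k]
    (A : Matrix m n R) (r : k → m) (c : k → n) (W : Matrix k k R) (h : A.submatrix r c * W = 1) :
    Fintype.card k ≤ A.rank := by
  have hunit : IsUnit (A.submatrix r c) :=
    (isUnit_iff_isUnit_det _).2 (isUnit_det_of_right_inverse h)
  exact (rank_of_isUnit _ hunit).symm.le.trans (rank_submatrix_le A r c)

end Matrix

def pivotRows : Fin 6 → Fin 11 := ![0, 1, 7, 8, 9, 10]

def pivotCols : Fin 6 → Fin 8 := ![0, 1, 3, 5, 6, 7]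

def pivotCoeffs : Matrix (Fin 6) (Fin 8) ℂ :=
  !![1, 0, 4, 0, 16, 0, 0, 0;
     0, 1, 0, 0, 0, 0, 0, 0;
     0, 0, 0, 1, 0, 0, 0, 0;
     0, 0, 0, 0, 0, 1, 0, 0;
     0, 0, 0, 0, 0, 0, 1, 0;
     0, 0, 0, 0, 0, 0, 0, 1]

noncomputable def pivotMinorInv : Matrix (Fin 6) (Fin 6) ℂ :=
  !![-32, 0, 0, 0, 0, -1;
     0, 48, 1/6, 1/2, -2, 0;
     0, 12, -1/12, -1/4, 1/2, 0;
     0, -12, 0, 0, 0, 0;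
     2, 0, 0, 0, 0, 0;
     0, 2, 1/72, 0, 0, 0]

/-- The transversality matrix `T(x,t)` at the focal point `(0,−1/2,1/2)` in the planar
wave propagation example with `a = 1`: its first 8 rows are those of the pulled-back
saturation matrix `ι*(Σ)` and its last 3 rows are `∂ι/∂t`, `∂ι/∂x₁`, `∂ι/∂x₂`.
Its rank is exactly `6`; in particular it is strictly less than `8`, so the mapping `ι`
is not algebraically transverse to the discriminant at the focal point. -/
theorem statement12 (T : Matrix (Fin 11) (Fin 8) ℂ)
    (hT : T = !![0, 0, 0, 0, 0, 0, 1/2, 0;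
                 0, 0, 0, 0, 0, -1/12, 0, 0;
                 0, 0, 0, 0, 0, 0, -1/12, 0;
                 0, 0, 0, 0, 0, 1/72, 0, 0;
                 0, 0, 0, 0, 0, 0, 1/72, 0;
                 0, 0, 0, 0, 0, -1/432, 0, 0;
                 0, 0, 0, 0, 0, 0, -1/432, 0;
                 0, 0, 0, 0, 0, 12, 0, 72;
                 0, -2, 0, -8, 0, -20, 0, -24;
                 0, -1, 0, -2, 0, -6, 0, 0;
                 -1, 0, -4, 0, -16, 0, -16, 0]) :
    T.rank = 6 := by
  have hfactor : T = T.submatrix id pivotCols * pivotCoeffs := by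
    ext i j
    rw [Matrix.mul_apply, hT]
    fin_cases i <;> fin_cases j <;> simp [pivotCols, pivotCoeffs, Fin.sum_univ_six]
  have hinv : T.submatrix pivotRows pivotCols * pivotMinorInv = 1 := by
    ext i j
    rw [Matrix.mul_apply, hT]
    fin_cases i <;> fin_cases j <;>
      simp [pivotRows, pivotCols, pivotMinorInv, Fin.sum_univ_six] <;> norm_num
  apply le_antisymm
  · simpa using Matrix.rank_le_card_of_eq_mul _ _ hfactor
  · simpa using T.card_le_rank_of_submatrix_mul_eq_one _ _ _ hinv
end

section
/- Define G : ℂ⁴ → ℂ⁸ by sending (w,q₁,q₂,q₃) to the vector of coefficients of z⁰, z¹, …, z⁷ of the polynomial (z + w)⁵·(q₁ + q₂·z + q₃·z² + 9·z³). Then the partial derivatives of G at the point (w,q₁,q₂,q₃) = (0,0,2,0) are ∂G/∂q₁ = (0,0,0,0,0,1,0,0), ∂G/∂q₂ = (0,0,0,0,0,0,1,0), ∂G/∂q₃ = (0,0,0,0,0,0,0,1), ∂G/∂w = (0,0,0,0,0,10,0,45); furthermore, the linear span in ℂ⁸ of these four vectors intersects the linear span of the three vectors (0,−2,0,−8,0,−20,0,−24),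 (0,−1,0,−2,0,−6,0,0), (−1,0,−4,0,−16,0,−16,0) only in the zero vector. -/
open Polynomial

/-- `G(w,q₁,q₂,q₃)` is the vector of coefficients of `z⁰,…,z⁷` of the polynomial
`(z + w)⁵·(q₁ + q₂z + q₃z² + 9z³)`; it parametrizes the union of the `A_k` (`k ≥ 4`)
singularity strata of the discriminant of `φ(z,s) = 9z⁸ + Σ s_i z^{i−1}`. -/
noncomputable def Gmap (w q₁ q₂ q₃ : ℂ) : Fin 8 → ℂ := fun k =>
  ((X + C w) ^ 5 * (C q₁ + C q₂ * X + C q₃ * X ^ 2 + 9 * X ^ 3)).coeff k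

/-!
`G` is affine in each `qᵢ`, and in `w` it is `taylor w (z⁵) · Q`, whose coefficients are
polynomials in `w` with derivative the coefficients of `taylor w (5z⁴) · Q`. At `(0,0,2,0)` the
four partial derivatives are therefore the coefficient vectors of `z⁵, z⁶, z⁷` and
`5z⁴(2z + 9z³)`, all multiples of `z⁵`: their span is killed by the projection onto the
coefficients of `z⁰,…,z⁴`. On the span of the three derivatives of `ι` that projection is
injective, since the `z⁰, z¹, z³` coordinates of `a•u + b•v + c•w` are `-c, -2a - b, -8a - 2b`.
-/

namespace Polynomial

theorem derivative_hasseDeriv {R : Type*} [Semiring R] (k : ℕ) (f : R[X]) :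
    derivative (hasseDeriv k f) = hasseDeriv k (derivative f) := by
  have h₁ := congrArg (· f) (hasseDeriv_comp (R := R) 1 k)
  have h₂ := congrArg (· f) (hasseDeriv_comp (R := R) k 1)
  simp only [LinearMap.comp_apply, LinearMap.smul_apply, hasseDeriv_one] at h₁ h₂
  rw [h₁, h₂, add_comm, Nat.choose_one_right, Nat.choose_succ_self_right]

variable {𝕜 : Type*} [NontriviallyNormedField 𝕜]

theorem hasDerivAt_taylor_coeff (P : 𝕜[X]) (i : ℕ) (t : 𝕜) :
    HasDerivAt (fun s => (taylor s P).coeff i) ((taylor t (derivative P)).coeff i) t := by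
  simp only [taylor_coeff, ← derivative_hasseDeriv]
  exact (hasseDeriv i P).hasDerivAt t

theorem hasDerivAt_taylor_mul_coeff (P Q : 𝕜[X]) (k : ℕ) (t : 𝕜) :
    HasDerivAt (fun s => (taylor s P * Q).coeff k) ((taylor t (derivative P) * Q).coeff k) t := by
  simp only [coeff_mul]
  exact HasDerivAt.fun_sum fun x _ => (hasDerivAt_taylor_coeff P x.1 t).mul_const _

theorem hasDerivAt_add_C_mul_coeff (A B : 𝕜[X]) (k : ℕ) (t : 𝕜) :
    HasDerivAt (fun s => (A + C s * B).coeff k) (B.coeff k) t := by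
  simp only [coeff_add, coeff_C_mul]
  simpa using ((hasDerivAt_id t).mul_const (B.coeff k)).const_add (A.coeff k)

end Polynomial

section Gmap

variable (w q₁ q₂ q₃ : ℂ)

theorem hasDerivAt_Gmap_w :
    HasDerivAt (fun s => Gmap s q₁ q₂ q₃)
      (fun k => (C 5 * (X + C w) ^ 4 * (C q₁ + C q₂ * X + C q₃ * X ^ 2 + 9 * X ^ 3)).coeff k) w := by
  refine hasDerivAt_pi.2 fun k => ?_
  have h := hasDerivAt_taylor_mul_coeff (X ^ 5) (C q₁ + C q₂ * X + C q₃ * X ^ 2 + 9 * X ^ 3) k w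
  simp only [taylor_X_pow, derivative_X_pow, taylor_mul, taylor_C, Nat.cast_ofNat,
    Nat.reduceSub] at h
  exact h

theorem hasDerivAt_Gmap_q₁ :
    HasDerivAt (fun s => Gmap w s q₂ q₃) (fun k => ((X + C w) ^ 5).coeff k) q₁ := by
  refine hasDerivAt_pi.2 fun k => (hasDerivAt_add_C_mul_coeff
    ((X + C w) ^ 5 * (C q₂ * X + C q₃ * X ^ 2 + 9 * X ^ 3)) _ k q₁).congr_of_eventuallyEq
    (.of_forall fun s => ?_)
  simp only [Gmap]
  congr 1
  ring

theorem hasDerivAt_Gmap_q₂ :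
    HasDerivAt (fun s => Gmap w q₁ s q₃) (fun k => ((X + C w) ^ 5 * X).coeff k) q₂ := by
  refine hasDerivAt_pi.2 fun k => (hasDerivAt_add_C_mul_coeff
    ((X + C w) ^ 5 * (C q₁ + C q₃ * X ^ 2 + 9 * X ^ 3)) _ k q₂).congr_of_eventuallyEq
    (.of_forall fun s => ?_)
  simp only [Gmap]
  congr 1
  ring

theorem hasDerivAt_Gmap_q₃ :
    HasDerivAt (fun s => Gmap w q₁ q₂ s) (fun k => ((X + C w) ^ 5 * X ^ 2).coeff k) q₃ := by
  refine hasDerivAt_pi.2 fun k => (hasDerivAt_add_C_mul_coeff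
    ((X + C w) ^ 5 * (C q₁ + C q₂ * X + 9 * X ^ 3)) _ k q₃).congr_of_eventuallyEq
    (.of_forall fun s => ?_)
  simp only [Gmap]
  congr 1
  ring

end Gmap

def lowCoeffs : (Fin 8 → ℂ) →ₗ[ℂ] Fin 5 → ℂ := LinearMap.funLeft ℂ ℂ (Fin.castLE (by norm_num))

theorem span_tangent_le_ker_lowCoeffs :
    Submodule.span ℂ
        ({![0, 0, 0, 0, 0, 1, 0, 0], ![0, 0, 0, 0, 0, 0, 1, 0],
          ![0, 0, 0, 0, 0, 0, 0, 1], ![0, 0, 0, 0, 0, 10, 0, 45]} : Set (Fin 8 → ℂ)) ≤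
      LinearMap.ker lowCoeffs := by
  rw [Submodule.span_le]
  rintro v (rfl | rfl | rfl | rfl | rfl) <;> ext i <;> fin_cases i <;> rfl

theorem disjoint_ker_lowCoeffs_span :
    Disjoint (LinearMap.ker lowCoeffs)
      (Submodule.span ℂ ({![0, -2, 0, -8, 0, -20, 0, -24], ![0, -1, 0, -2, 0, -6, 0, 0],
          ![-1, 0, -4, 0, -16, 0, -16, 0]} : Set (Fin 8 → ℂ))) := by
  rw [Submodule.disjoint_def]
  rintro _ hlow hspan
  obtain ⟨a, b, c, rfl⟩ := Submodule.mem_span_triple.1 hspan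
  have h₀ : a * 0 + b * 0 + c * -1 = 0 := congrFun hlow 0
  have h₁ : a * -2 + b * -1 + c * 0 = 0 := congrFun hlow 1
  have h₃ : a * -8 + b * -2 + c * 0 = 0 := congrFun hlow 3
  have ha : a = 0 := by linear_combination (-1 / 4 : ℂ) * h₃ + (1 / 2 : ℂ) * h₁
  have hb : b = 0 := by linear_combination -h₁ - 2 * ha
  have hc : c = 0 := by linear_combination -h₀
  simp [ha, hb, hc]

/-- The partial derivatives of `G` at `(w,q₁,q₂,q₃) = (0,0,2,0)` are the four indicated
vectors, and their span meets the span of `∂ι/∂t`, `∂ι/∂x₁`, `∂ι/∂x₂` (the three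
indicated vectors) only in `0`: no `A_k` stratum with `k ≥ 4` meets the image of `ι`
near the focal point except at the focal point itself. -/
theorem statement13 :
    deriv (fun q₁ : ℂ => Gmap 0 q₁ 2 0) 0 = ![0, 0, 0, 0, 0, 1, 0, 0] ∧
    deriv (fun q₂ : ℂ => Gmap 0 0 q₂ 0) 2 = ![0, 0, 0, 0, 0, 0, 1, 0] ∧
    deriv (fun q₃ : ℂ => Gmap 0 0 2 q₃) 0 = ![0, 0, 0, 0, 0, 0, 0, 1] ∧
    deriv (fun w : ℂ => Gmap w 0 2 0) 0 = ![0, 0, 0, 0, 0, 10, 0, 45] ∧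
    Submodule.span ℂ
        ({![0, 0, 0, 0, 0, 1, 0, 0], ![0, 0, 0, 0, 0, 0, 1, 0],
          ![0, 0, 0, 0, 0, 0, 0, 1], ![0, 0, 0, 0, 0, 10, 0, 45]} :
          Set (Fin 8 → ℂ)) ⊓
      Submodule.span ℂ
        ({![0, -2, 0, -8, 0, -20, 0, -24], ![0, -1, 0, -2, 0, -6, 0, 0],
          ![-1, 0, -4, 0, -16, 0, -16, 0]} : Set (Fin 8 → ℂ)) = ⊥ := by
  have hw : (C 5 * X ^ 4 * (C 2 * X + 9 * X ^ 3) : ℂ[X]) = C 10 * X ^ 5 + C 45 * X ^ 7 := by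
    rw [← C_ofNat, show (10 : ℂ) = 5 * 2 by norm_num, show (45 : ℂ) = 5 * 9 by norm_num]
    simp only [C_mul]
    ring
  refine ⟨(hasDerivAt_Gmap_q₁ 0 0 2 0).deriv.trans ?_, (hasDerivAt_Gmap_q₂ 0 0 2 0).deriv.trans ?_,
    (hasDerivAt_Gmap_q₃ 0 0 2 0).deriv.trans ?_, (hasDerivAt_Gmap_w 0 0 2 0).deriv.trans ?_,
    disjoint_iff.1 (disjoint_ker_lowCoeffs_span.mono_left span_tangent_le_ker_lowCoeffs)⟩
  all_goals
    simp only [map_zero, add_zero, zero_mul, zero_add, ← pow_succ, ← pow_add, hw]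
    ext k
    fin_cases k <;> simp [coeff_X_pow]
end
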